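/- arXiv:1111.5247 — 2 statements merged into one kernel-verified Lean document; each statement's English description precedes it below -/
import Mathlib

section
/- Let T be a natural number and let C = ℂ^{T+1} with standard orthonormal basis e₀, …, e_T. Let W be a finite-dimensional complex inner product space, let w₀, …, w_T ∈ W be unit vectors, and define η = (1/√(T+1)) Σ_{t=0}^{T} e_t ⊗ w_t in C ⊗ W. Let Π be an orthogonal projection on W and let H_out be the operator on C ⊗ W given by (the rank-one projection onto e_T) ⊗ Π. Suppose there is a unitary V on W with w_T = V w₀, and suppose φ ∈ W is a unit vector and ε, s ≥ 0 satisfy |⟨w₀, φ⟩|² ≥ 1 − ε and ⟨V φ, Π (V φ)⟩ ≥ 1 − s. Then ⟨η, H_out η⟩ ≥ (1 − s − 2√ε)/(T+1). -/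
/-!
Only the last clock value survives `H_out`, so `⟪η, H_out η⟫ = ‖Π w_T‖² / (T + 1)`. Write
`w₀ = ⟪φ, w₀⟫ φ + r` with `r ⊥ φ`, so `‖r‖² = 1 - |⟪w₀, φ⟫|² ≤ ε`. Since `Π` is a contraction and
`V` an isometry, `‖Π w_T‖ ≥ |⟪φ, w₀⟫| ‖Π V φ‖ - ‖r‖`, and squaring this gives
`‖Π w_T‖² ≥ ‖Π V φ‖² - 2 ‖r‖ ≥ 1 - s - 2√ε`.
-/

open scoped InnerProductSpace Kronecker Matrix

/-- The tensor product of two vectors: `(u ⊗ v)(i,j) = uᵢ · vⱼ`. -/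
noncomputable def tensorVec {ι κ : Type*} [Fintype ι] [Fintype κ]
    (u : EuclideanSpace ℂ ι) (v : EuclideanSpace ℂ κ) : EuclideanSpace ℂ (ι × κ) :=
  WithLp.toLp 2 (fun p => u p.1 * v p.2)

section TensorVec

variable {ι κ ℓ ν : Type*} [Fintype ι] [Fintype κ]

theorem inner_tensorVec (u u' : EuclideanSpace ℂ ι) (v v' : EuclideanSpace ℂ κ) :
    ⟪tensorVec u v, tensorVec u' v'⟫_ℂ = ⟪u, u'⟫_ℂ * ⟪v, v'⟫_ℂ := by
  simp only [tensorVec, PiLp.inner_apply, Fintype.sum_prod_type, Finset.sum_mul_sum,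
    RCLike.inner_apply, map_mul]
  refine Finset.sum_congr rfl fun i _ => Finset.sum_congr rfl fun j _ => ?_
  ring

variable [DecidableEq ι] [DecidableEq κ]

theorem toEuclideanLin_kronecker_tensorVec [Fintype ℓ] [Fintype ν]
    (A : Matrix ℓ ι ℂ) (B : Matrix ν κ ℂ) (u : EuclideanSpace ℂ ι) (v : EuclideanSpace ℂ κ) :
    Matrix.toEuclideanLin (A ⊗ₖ B) (tensorVec u v) =
      tensorVec (Matrix.toEuclideanLin A u) (Matrix.toEuclideanLin B v) := by
  ext p
  simp only [tensorVec, Matrix.ofLp_toLpLin, Matrix.toLin'_apply, Matrix.mulVec, dotProduct,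
    Fintype.sum_prod_type, Matrix.kroneckerMap_apply, Finset.sum_mul_sum]
  refine Finset.sum_congr rfl fun i _ => Finset.sum_congr rfl fun j _ => ?_
  ring

theorem inner_sum_tensorVec_single_kronecker (A : Matrix ι ι ℂ) (B : Matrix κ κ ℂ)
    (w : ι → EuclideanSpace ℂ κ) :
    ⟪∑ t, tensorVec (EuclideanSpace.single t 1) (w t),
      Matrix.toEuclideanLin (A ⊗ₖ B) (∑ t, tensorVec (EuclideanSpace.single t 1) (w t))⟫_ℂ =
      ∑ t, ∑ t', A t t' * ⟪w t, Matrix.toEuclideanLin B (w t')⟫_ℂ := by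
  simp only [map_sum, sum_inner, inner_sum, toEuclideanLin_kronecker_tensorVec, inner_tensorVec,
    EuclideanSpace.inner_single_left, Matrix.ofLp_toLpLin, Matrix.toLin'_apply]
  simp only [map_one, PiLp.ofLp_single, Matrix.mulVec_single_one, Matrix.col_apply, one_mul]
  exact Finset.sum_comm

theorem inner_sum_tensorVec_single_kronecker_single (a : ι) (B : Matrix κ κ ℂ)
    (w : ι → EuclideanSpace ℂ κ) :
    ⟪∑ t, tensorVec (EuclideanSpace.single t 1) (w t),
      Matrix.toEuclideanLin (Matrix.single a a 1 ⊗ₖ B)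
        (∑ t, tensorVec (EuclideanSpace.single t 1) (w t))⟫_ℂ =
      ⟪w a, Matrix.toEuclideanLin B (w a)⟫_ℂ := by
  rw [inner_sum_tensorVec_single_kronecker]
  simp [Matrix.single_apply, ite_and]

end TensorVec

namespace LinearMap.IsSymmetricProjection

variable {𝕜 E : Type*} [RCLike 𝕜] [NormedAddCommGroup E] [InnerProductSpace 𝕜 E]
  {p : E →ₗ[𝕜] E}

theorem re_inner_apply_self (hp : p.IsSymmetricProjection) (x : E) :
    RCLike.re ⟪x, p x⟫_𝕜 = ‖p x‖ ^ 2 := by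
  rw [← inner_self_eq_norm_sq (𝕜 := 𝕜), hp.isSymmetric, ← Module.End.mul_apply,
    hp.isIdempotentElem.eq]

theorem norm_apply_le (hp : p.IsSymmetricProjection) (x : E) : ‖p x‖ ≤ ‖x‖ := by
  obtain ⟨K, _, rfl⟩ := LinearMap.isSymmetricProjection_iff_eq_coe_starProjection.mp hp
  exact K.norm_starProjection_apply_le x

end LinearMap.IsSymmetricProjection

theorem sq_sub_two_mul_le_sq_of_mul_le_add {u x c q : ℝ} (hx : 0 ≤ x) (hc : 0 ≤ c) (hq : 0 ≤ q)
    (hq1 : q ≤ 1) (hxc : x ^ 2 + c ^ 2 = 1) (h : c * q ≤ u + x) : q ^ 2 - 2 * x ≤ u ^ 2 := by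
  have hcq : 0 ≤ c * q := mul_nonneg hc hq
  have hx1 : x ≤ 1 := by nlinarith
  have hxq : x ^ 2 * q ^ 2 ≤ x ^ 2 := mul_le_of_le_one_right (sq_nonneg x) (pow_le_one₀ hq hq1)
  rcases le_or_gt x (c * q) with hle | hlt
  · have hsq : (c * q - x) ^ 2 ≤ u ^ 2 := pow_le_pow_left₀ (by linarith) (by linarith) 2
    nlinarith [mul_nonneg hx (by nlinarith : (0 : ℝ) ≤ 1 - c * q)]
  · nlinarith [mul_self_le_mul_self hcq hlt.le]

section Overlap

variable {𝕜 E F : Type*} [RCLike 𝕜] [NormedAddCommGroup E] [InnerProductSpace 𝕜 E]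
  [NormedAddCommGroup F] [NormedSpace 𝕜 F]

theorem norm_sub_inner_smul_sq {φ : E} (hφ : ‖φ‖ = 1) (u : E) :
    ‖u - ⟪φ, u⟫_𝕜 • φ‖ ^ 2 = ‖u‖ ^ 2 - ‖⟪φ, u⟫_𝕜‖ ^ 2 := by
  rw [@norm_sub_sq 𝕜, inner_smul_right, ← inner_conj_symm, RCLike.conj_mul, norm_smul, hφ,
    RCLike.norm_conj]
  norm_cast
  ring

theorem norm_apply_sq_sub_two_mul_sqrt_le_norm_apply_sq (f : E →ₗ[𝕜] F)
    (hf : ∀ x, ‖f x‖ ≤ ‖x‖) {u φ : E} (hu : ‖u‖ = 1) (hφ : ‖φ‖ = 1) :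
    ‖f φ‖ ^ 2 - 2 * √(1 - ‖⟪u, φ⟫_𝕜‖ ^ 2) ≤ ‖f u‖ ^ 2 := by
  have hr : ‖u - ⟪φ, u⟫_𝕜 • φ‖ = √(1 - ‖⟪u, φ⟫_𝕜‖ ^ 2) := by
    rw [← Real.sqrt_sq (norm_nonneg _), norm_sub_inner_smul_sq hφ, hu, ← inner_conj_symm,
      RCLike.norm_conj, one_pow]
  have htri : ‖⟪φ, u⟫_𝕜‖ * ‖f φ‖ ≤ ‖f u‖ + ‖u - ⟪φ, u⟫_𝕜 • φ‖ := calc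
    ‖⟪φ, u⟫_𝕜‖ * ‖f φ‖ = ‖f u - f (u - ⟪φ, u⟫_𝕜 • φ)‖ := by simp [norm_smul]
    _ ≤ ‖f u‖ + ‖f (u - ⟪φ, u⟫_𝕜 • φ)‖ := norm_sub_le _ _
    _ ≤ ‖f u‖ + ‖u - ⟪φ, u⟫_𝕜 • φ‖ := by gcongr; exact hf _
  rw [← hr]
  refine sq_sub_two_mul_le_sq_of_mul_le_add (norm_nonneg _) (norm_nonneg _) (norm_nonneg _)
    ((hf φ).trans hφ.le) ?_ htri
  rw [norm_sub_inner_smul_sq hφ, hu]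
  ring

end Overlap

theorem step_three_general
    (T : ℕ) {ι : Type*} [Fintype ι] [DecidableEq ι]
    (w : Fin (T + 1) → EuclideanSpace ℂ ι) (hw : ∀ t, ‖w t‖ = 1)
    (η : EuclideanSpace ℂ (Fin (T + 1) × ι))
    (hη : η = ((Real.sqrt (T + 1) : ℂ))⁻¹ •
      ∑ t : Fin (T + 1), tensorVec (EuclideanSpace.single t 1) (w t))
    (Proj : EuclideanSpace ℂ ι →ₗ[ℂ] EuclideanSpace ℂ ι)
    (hProj_sa : ∀ x y, ⟪Proj x, y⟫_ℂ = ⟪x, Proj y⟫_ℂ) (hProj_idem : Proj ∘ₗ Proj = Proj)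
    (Hout : EuclideanSpace ℂ (Fin (T + 1) × ι) →ₗ[ℂ] EuclideanSpace ℂ (Fin (T + 1) × ι))
    (hHout : Hout = Matrix.toEuclideanLin
      ((Matrix.single (Fin.last T) (Fin.last T) (1 : ℂ)) ⊗ₖ
        (Matrix.toEuclideanLin.symm Proj)))
    (V : EuclideanSpace ℂ ι ≃ₗᵢ[ℂ] EuclideanSpace ℂ ι)
    (hV : w (Fin.last T) = V (w 0))
    (φ : EuclideanSpace ℂ ι) (hφ : ‖φ‖ = 1)
    (ε s : ℝ)
    (hoverlap : 1 - ε ≤ ‖⟪w 0, φ⟫_ℂ‖ ^ 2)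
    (haccept : 1 - s ≤ (⟪V φ, Proj (V φ)⟫_ℂ).re) :
    (1 - s - 2 * Real.sqrt ε) / (T + 1) ≤ (⟪η, Hout η⟫_ℂ).re := by
  have hP : Proj.IsSymmetricProjection := ⟨hProj_idem, hProj_sa⟩
  have hinner : ⟪η, Hout η⟫_ℂ =
      (((T + 1 : ℝ)⁻¹ : ℝ) : ℂ) * ⟪w (Fin.last T), Proj (w (Fin.last T))⟫_ℂ := by
    have hc : starRingEnd ℂ ((Real.sqrt (T + 1) : ℂ))⁻¹ * ((Real.sqrt (T + 1) : ℂ))⁻¹ =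
        (((T + 1 : ℝ)⁻¹ : ℝ) : ℂ) := by
      rw [map_inv₀, Complex.conj_ofReal, ← mul_inv, ← Complex.ofReal_mul,
        Real.mul_self_sqrt (by positivity), Complex.ofReal_inv]
    rw [hHout, hη, map_smul, inner_smul_left, inner_smul_right,
      inner_sum_tensorVec_single_kronecker_single, LinearEquiv.apply_symm_apply, ← mul_assoc, hc]
  have hcore := norm_apply_sq_sub_two_mul_sqrt_le_norm_apply_sq Proj hP.norm_apply_le
    (by rw [V.norm_map, hw 0]) (by rw [V.norm_map, hφ] : ‖V φ‖ = 1)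
  rw [V.inner_map_map, ← hV] at hcore
  rw [← RCLike.re_to_complex, hP.re_inner_apply_self] at haccept
  have hsqrt : √(1 - ‖⟪w 0, φ⟫_ℂ‖ ^ 2) ≤ √ε := Real.sqrt_le_sqrt (by linarith)
  rw [hinner, Complex.re_ofReal_mul, ← RCLike.re_to_complex, hP.re_inner_apply_self,
    div_eq_inv_mul]
  gcongr
  linarith

/-- **Lemma (Step three), abstract form.** Let `η = (1/√(T+1)) Σ_t e_t ⊗ w_t` be a history
state, `Π` an orthogonal projection on `W`, and `H_out = |e_T⟩⟨e_T| ⊗ Π`. If `w_T = V w₀`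
for a unitary `V`, and `φ` is a unit vector with `|⟨w₀, φ⟩|² ≥ 1 − ε` and
`⟨V φ, Proj (V φ)⟩ ≥ 1 − s`, then `⟨η, H_out η⟩ ≥ (1 − s − 2√ε)/(T+1)`. -/
theorem step_three
    (T : ℕ) {ι : Type*} [Fintype ι] [DecidableEq ι] [Nonempty ι]
    (w : Fin (T + 1) → EuclideanSpace ℂ ι) (hw : ∀ t, ‖w t‖ = 1)
    (η : EuclideanSpace ℂ (Fin (T + 1) × ι))
    (hη : η = ((Real.sqrt (T + 1) : ℂ))⁻¹ •
      ∑ t : Fin (T + 1), tensorVec (EuclideanSpace.single t 1) (w t))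
    (Proj : EuclideanSpace ℂ ι →ₗ[ℂ] EuclideanSpace ℂ ι)
    (hProj_sa : ∀ x y, ⟪Proj x, y⟫_ℂ = ⟪x, Proj y⟫_ℂ) (hProj_idem : Proj ∘ₗ Proj = Proj)
    (Hout : EuclideanSpace ℂ (Fin (T + 1) × ι) →ₗ[ℂ] EuclideanSpace ℂ (Fin (T + 1) × ι))
    (hHout : Hout = Matrix.toEuclideanLin
      ((Matrix.single (Fin.last T) (Fin.last T) (1 : ℂ)) ⊗ₖ
        (Matrix.toEuclideanLin.symm Proj)))
    (V : EuclideanSpace ℂ ι ≃ₗᵢ[ℂ] EuclideanSpace ℂ ι)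
    (hV : w (Fin.last T) = V (w 0))
    (φ : EuclideanSpace ℂ ι) (hφ : ‖φ‖ = 1)
    (ε s : ℝ) (hε : 0 ≤ ε) (hs : 0 ≤ s)
    (hoverlap : 1 - ε ≤ ‖⟪w 0, φ⟫_ℂ‖ ^ 2)
    (haccept : 1 - s ≤ (⟪V φ, Proj (V φ)⟫_ℂ).re) :
    (1 - s - 2 * Real.sqrt ε) / (T + 1) ≤ (⟪η, Hout η⟫_ℂ).re :=
  step_three_general T w hw η hη Proj hProj_sa hProj_idem Hout hHout V hV φ hφ ε s hoverlap haccept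
end

section
/- Let T ≥ 1 be a natural number, let C = ℂ^{T+1} with standard orthonormal basis e₀, …, e_T, and set α = (1/√(T+1)) Σ_{t=0}^{T} e_t. Let A be a finite-dimensional complex inner product space of dimension at least 2 with a unit vector a₀, and let P be a nontrivial finite-dimensional complex inner product space. In H = C ⊗ A ⊗ P, define the subspaces L₁ = span{e₀ ⊗ a₀ ⊗ p : p ∈ P} + span{e_t ⊗ a ⊗ p : 1 ≤ t ≤ T, a ∈ A, p ∈ P}, L₂ = span{α ⊗ a ⊗ p : a ∈ A, p ∈ P}, and L = span{α ⊗ a₀ ⊗ p : p ∈ P}. Then for every unit vector y ∈ L₂ orthogonal to L, the squared norm of the orthogonal projection of y onto L₁ is at most 1 − 1/(T+1). In particular, cos²θ ≤ 1 − 1/(T+1), where cos θ = sup{|⟨x, y⟩| : x ∈ L₁ ∩ L^⊥, y ∈ L₂ ∩ L^⊥, ‖x‖ = ‖y‖ = 1}. -/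
/-!
A unit vector `y ∈ L₂ ⊓ Lᗮ` has the form `α ⊗ w` with `w ⟂ a₀ ⊗ p` for every `p`. Splitting
the clock state as `α = (α - α₀ e₀) + α₀ e₀` writes `y = z + r` with `z ∈ L₁` and
`r = α₀ e₀ ⊗ w ∈ L₁ᗮ`, the latter precisely because `w ⟂ a₀ ⊗ p`. Hence `P_{L₁} y = z` and, by
Pythagoras, `‖P_{L₁} y‖² = 1 - |α₀|² = 1 - 1/(T+1)`. The bound on `cos θ` follows because
`|⟪x, y⟫| = |⟪x, P_{L₁} y⟫| ≤ ‖P_{L₁} y‖` for a unit vector `x ∈ L₁`.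
-/

open scoped InnerProductSpace

open Submodule

namespace AngleBound

section Tensor

variable {ι κ μ : Type*} [Fintype ι] [Fintype κ] [Fintype μ]

lemma tensorVec_apply (u : EuclideanSpace ℂ ι) (v : EuclideanSpace ℂ κ) (q : ι × κ) :
    tensorVec u v q = u q.1 * v q.2 := rfl

noncomputable def tensorVecₗ :
    EuclideanSpace ℂ ι →ₗ[ℂ] EuclideanSpace ℂ κ →ₗ[ℂ] EuclideanSpace ℂ (ι × κ) :=
  LinearMap.mk₂ ℂ tensorVec
    (fun u u' v => by ext q; simp [tensorVec_apply, add_mul])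
    (fun c u v => by ext q; simp [tensorVec_apply, mul_assoc])
    (fun u v v' => by ext q; simp [tensorVec_apply, mul_add])
    (fun c u v => by ext q; simp [tensorVec_apply, mul_left_comm])

@[simp]
lemma tensorVecₗ_apply (u : EuclideanSpace ℂ ι) (v : EuclideanSpace ℂ κ) :
    tensorVecₗ u v = tensorVec u v := rfl

lemma inner_tensorVec (u u' : EuclideanSpace ℂ ι) (v v' : EuclideanSpace ℂ κ) :
    ⟪tensorVec u v, tensorVec u' v'⟫_ℂ = ⟪u, u'⟫_ℂ * ⟪v, v'⟫_ℂ := by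
  simp only [PiLp.inner_apply, RCLike.inner_apply, tensorVec_apply]
  rw [Fintype.sum_prod_type, Finset.sum_mul_sum]
  refine Finset.sum_congr rfl fun i _ => Finset.sum_congr rfl fun j _ => ?_
  simp only [map_mul]
  ring

lemma norm_tensorVec (u : EuclideanSpace ℂ ι) (v : EuclideanSpace ℂ κ) :
    ‖tensorVec u v‖ = ‖u‖ * ‖v‖ := by
  rw [← sq_eq_sq₀ (norm_nonneg _) (by positivity), mul_pow]
  have h := inner_tensorVec u u v v
  simp only [inner_self_eq_norm_sq_to_K] at h
  exact_mod_cast h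

lemma tensorVec_single_single [DecidableEq ι] [DecidableEq κ] (i : ι) (j : κ) (a b : ℂ) :
    tensorVec (EuclideanSpace.single i a) (EuclideanSpace.single j b) =
      EuclideanSpace.single (i, j) (a * b) := by
  ext q
  by_cases h1 : q.1 = i <;> by_cases h2 : q.2 = j <;>
    simp [tensorVec_apply, PiLp.single_apply, Prod.ext_iff, h1, h2]

lemma span_tensorVec_eq_top :
    span ℂ {x : EuclideanSpace ℂ (ι × κ) | ∃ u v, x = tensorVec u v} = ⊤ := by
  classical
  rw [eq_top_iff, ← (EuclideanSpace.basisFun (ι × κ) ℂ).toBasis.span_eq]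
  refine span_mono ?_
  rintro _ ⟨q, rfl⟩
  refine ⟨EuclideanSpace.single q.1 1, EuclideanSpace.single q.2 1, ?_⟩
  simp [tensorVec_single_single]

lemma tensorVec_mem_of_forall_tensorVec_mem {K : Submodule ℂ (EuclideanSpace ℂ (ι × (κ × μ)))}
    {u : EuclideanSpace ℂ ι} (h : ∀ a p, tensorVec u (tensorVec a p) ∈ K)
    (w : EuclideanSpace ℂ (κ × μ)) : tensorVec u w ∈ K := by
  have hw : w ∈ span ℂ {x | ∃ a p, x = tensorVec a p} := by
    rw [span_tensorVec_eq_top]; trivial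
  induction hw using span_induction with
  | mem x hx => obtain ⟨a, p, rfl⟩ := hx; exact h a p
  | zero => simpa only [← tensorVecₗ_apply, map_zero] using K.zero_mem
  | add x x' _ _ hx hx' => simpa only [← tensorVecₗ_apply, map_add] using K.add_mem hx hx'
  | smul c x _ hx => simpa only [← tensorVecₗ_apply, map_smul] using K.smul_mem c hx

lemma exists_eq_tensorVec_of_mem_span {u : EuclideanSpace ℂ ι}
    {y : EuclideanSpace ℂ (ι × (κ × μ))}
    (hy : y ∈ span ℂ {x | ∃ a p, x = tensorVec u (tensorVec a p)}) :
    ∃ w, y = tensorVec u w := by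
  have hle : span ℂ {x | ∃ a p, x = tensorVec u (tensorVec a p)} ≤
      LinearMap.range (tensorVecₗ u) :=
    span_le.2 fun _ ⟨(a : EuclideanSpace ℂ κ), (p : EuclideanSpace ℂ μ), hx⟩ =>
      ⟨tensorVec a p, hx.symm⟩
  obtain ⟨w, rfl⟩ := hle hy
  exact ⟨w, rfl⟩

end Tensor

section Clock

variable {τ ι κ : Type*} [Fintype τ] [DecidableEq τ] [Fintype ι] [Fintype κ]

/-- The paper's `L₁` (there `t₀ = 0`); `historySpace α` and `initHistorySpace α a₀` below are
its `L₂` and `L`. -/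
noncomputable def initSpace (t₀ : τ) (a₀ : EuclideanSpace ℂ ι) :
    Submodule ℂ (EuclideanSpace ℂ (τ × (ι × κ))) :=
  span ℂ ({x | ∃ p : EuclideanSpace ℂ κ,
      x = tensorVec (EuclideanSpace.single t₀ 1) (tensorVec a₀ p)} ∪
    {x | ∃ t, t ≠ t₀ ∧ ∃ a : EuclideanSpace ℂ ι, ∃ p : EuclideanSpace ℂ κ,
      x = tensorVec (EuclideanSpace.single t 1) (tensorVec a p)})

noncomputable def historySpace (α : EuclideanSpace ℂ τ) :
    Submodule ℂ (EuclideanSpace ℂ (τ × (ι × κ))) :=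
  span ℂ {x | ∃ a : EuclideanSpace ℂ ι, ∃ p : EuclideanSpace ℂ κ,
    x = tensorVec α (tensorVec a p)}

noncomputable def initHistorySpace (α : EuclideanSpace ℂ τ) (a₀ : EuclideanSpace ℂ ι) :
    Submodule ℂ (EuclideanSpace ℂ (τ × (ι × κ))) :=
  span ℂ {x | ∃ p : EuclideanSpace ℂ κ, x = tensorVec α (tensorVec a₀ p)}

lemma tensorVec_mem_initSpace {t₀ : τ} (a₀ : EuclideanSpace ℂ ι) {u : EuclideanSpace ℂ τ}
    (hu : u t₀ = 0) (w : EuclideanSpace ℂ (ι × κ)) : tensorVec u w ∈ initSpace t₀ a₀ := by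
  have hsum : u = ∑ t ∈ Finset.univ.erase t₀, u t • EuclideanSpace.single t 1 := by
    conv_lhs => rw [← (EuclideanSpace.basisFun τ ℂ).sum_repr u,
      ← Finset.add_sum_erase _ _ (Finset.mem_univ t₀)]
    simp only [EuclideanSpace.basisFun_repr, EuclideanSpace.basisFun_apply, hu, zero_smul,
      zero_add]
  rw [hsum, ← tensorVecₗ_apply, map_sum, LinearMap.sum_apply]
  refine sum_mem fun t ht => ?_
  rw [map_smul, LinearMap.smul_apply, tensorVecₗ_apply]
  refine smul_mem _ _ (tensorVec_mem_of_forall_tensorVec_mem (fun a p => subset_span ?_) w)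
  exact Or.inr ⟨t, Finset.ne_of_mem_erase ht, a, p, rfl⟩

lemma tensorVec_single_mem_orthogonal_initSpace {t₀ : τ} {a₀ : EuclideanSpace ℂ ι}
    {w : EuclideanSpace ℂ (ι × κ)} (hw : ∀ p, ⟪w, tensorVec a₀ p⟫_ℂ = 0) :
    tensorVec (EuclideanSpace.single t₀ 1) w ∈ (initSpace t₀ a₀)ᗮ := by
  refine (isOrtho_span.2 ?_).le (subset_span (Set.mem_singleton _))
  rintro _ rfl _ (⟨p, rfl⟩ | ⟨t, ht, a, p, rfl⟩)
  · rw [inner_tensorVec, hw, mul_zero]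
  · rw [inner_tensorVec, EuclideanSpace.inner_single_left, PiLp.single_apply, if_neg ht.symm,
      mul_zero, zero_mul]

theorem norm_sq_starProjection_initSpace {α : EuclideanSpace ℂ τ} (hα : ‖α‖ = 1) (t₀ : τ)
    (a₀ : EuclideanSpace ℂ ι) {y : EuclideanSpace ℂ (τ × (ι × κ))} (hy : y ∈ historySpace α)
    (hyL : y ∈ (initHistorySpace α a₀)ᗮ) (hy1 : ‖y‖ = 1) :
    ‖(initSpace t₀ a₀).starProjection y‖ ^ 2 = 1 - ‖α t₀‖ ^ 2 := by
  obtain ⟨w, rfl⟩ := exists_eq_tensorVec_of_mem_span hy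
  have hw : ‖w‖ = 1 := by rwa [norm_tensorVec, hα, one_mul] at hy1
  have hwa₀ : ∀ p, ⟪w, tensorVec a₀ p⟫_ℂ = 0 := fun p => by
    have h := (mem_orthogonal' _ _).1 hyL _ (subset_span ⟨p, rfl⟩)
    simpa [inner_tensorVec, inner_self_eq_norm_sq_to_K, hα] using h
  set e : EuclideanSpace ℂ τ := EuclideanSpace.single t₀ 1
  set z := tensorVec (α - α t₀ • e) w
  set r := α t₀ • tensorVec e w
  have hyzr : tensorVec α w = z + r := by
    simp only [z, r, ← tensorVecₗ_apply, map_sub, map_smul, LinearMap.sub_apply,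
      LinearMap.smul_apply, sub_add_cancel]
  have hz : z ∈ initSpace t₀ a₀ := tensorVec_mem_initSpace a₀ (by simp [e]) w
  have hr : r ∈ (initSpace t₀ a₀)ᗮ :=
    smul_mem _ _ (tensorVec_single_mem_orthogonal_initSpace hwa₀)
  have hproj : (initSpace t₀ a₀).starProjection (tensorVec α w) = z :=
    eq_starProjection_of_mem_of_inner_eq_zero hz fun v hv => by
      rw [hyzr, add_sub_cancel_left]; exact inner_left_of_mem_orthogonal hv hr
  have hnr : ‖r‖ = ‖α t₀‖ := by simp [r, e, norm_smul, norm_tensorVec, hw]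
  have hpyth := norm_add_sq_eq_norm_sq_add_norm_sq_of_inner_eq_zero z r
    (inner_right_of_mem_orthogonal hz hr)
  rw [← hyzr, hy1, hnr] at hpyth
  rw [hproj]
  linear_combination -hpyth

end Clock

noncomputable def uniformState (n : ℕ) : EuclideanSpace ℂ (Fin (n + 1)) :=
  ((Real.sqrt (n + 1) : ℂ))⁻¹ • ∑ t : Fin (n + 1), EuclideanSpace.single t 1

lemma norm_sq_uniformState_apply (n : ℕ) (t : Fin (n + 1)) :
    ‖uniformState n t‖ ^ 2 = 1 / (n + 1) := by
  have h : uniformState n t = ((Real.sqrt (n + 1) : ℂ))⁻¹ := by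
    simp [uniformState]
  rw [h, norm_inv, Complex.norm_real, Real.norm_of_nonneg (Real.sqrt_nonneg _), inv_pow,
    Real.sq_sqrt (by positivity), one_div]

lemma norm_uniformState (n : ℕ) : ‖uniformState n‖ = 1 := by
  refine (pow_eq_one_iff_of_nonneg (norm_nonneg _) two_ne_zero).1 ?_
  rw [EuclideanSpace.norm_sq_eq]
  simp only [norm_sq_uniformState_apply, Finset.sum_const, Finset.card_univ, Fintype.card_fin,
    nsmul_eq_mul]
  push_cast
  field_simp

section Angle

variable {𝕜 E : Type*} [RCLike 𝕜] [NormedAddCommGroup E] [InnerProductSpace 𝕜 E]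

lemma norm_inner_le_norm_mul_norm_starProjection {K : Submodule 𝕜 E} [K.HasOrthogonalProjection]
    {x : E} (hx : x ∈ K) (y : E) : ‖⟪x, y⟫_𝕜‖ ≤ ‖x‖ * ‖K.starProjection y‖ := by
  rw [← (starProjection_eq_self_iff (K := K)).2 hx, inner_starProjection_left_eq_right,
    (starProjection_eq_self_iff (K := K)).2 hx]
  exact norm_inner_le_norm _ _

end Angle

lemma sSup_sq_le_of_forall_sq_le {S : Set ℝ} {c : ℝ} (hc : 0 ≤ c)
    (hS : ∀ r ∈ S, 0 ≤ r ∧ r ^ 2 ≤ c) : sSup S ^ 2 ≤ c := by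
  have hle : sSup S ≤ Real.sqrt c :=
    Real.sSup_le (fun r hr => Real.le_sqrt_of_sq_le (hS r hr).2) (Real.sqrt_nonneg c)
  calc sSup S ^ 2 ≤ Real.sqrt c ^ 2 :=
        pow_le_pow_left₀ (Real.sSup_nonneg fun r hr => (hS r hr).1) hle 2
    _ = c := Real.sq_sqrt hc

end AngleBound

open AngleBound

theorem angle_bound_general
    (T dA dP : ℕ)
    (a₀ : EuclideanSpace ℂ (Fin dA))
    (α : EuclideanSpace ℂ (Fin (T + 1)))
    (hα : α = ((Real.sqrt (T + 1) : ℂ))⁻¹ • ∑ t : Fin (T + 1), EuclideanSpace.single t 1)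
    (L₁ L₂ L : Submodule ℂ (EuclideanSpace ℂ (Fin (T + 1) × (Fin dA × Fin dP))))
    (hL₁ : L₁ = Submodule.span ℂ
      ({x | ∃ p : EuclideanSpace ℂ (Fin dP),
          x = tensorVec (EuclideanSpace.single 0 1) (tensorVec a₀ p)} ∪
       {x | ∃ t : Fin (T + 1), t ≠ 0 ∧ ∃ a : EuclideanSpace ℂ (Fin dA),
          ∃ p : EuclideanSpace ℂ (Fin dP),
          x = tensorVec (EuclideanSpace.single t 1) (tensorVec a p)}))
    (hL₂ : L₂ = Submodule.span ℂ
      {x | ∃ a : EuclideanSpace ℂ (Fin dA), ∃ p : EuclideanSpace ℂ (Fin dP),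
          x = tensorVec α (tensorVec a p)})
    (hL : L = Submodule.span ℂ
      {x | ∃ p : EuclideanSpace ℂ (Fin dP), x = tensorVec α (tensorVec a₀ p)}) :
    (∀ y ∈ L₂, y ∈ Lᗮ → ‖y‖ = 1 →
      ‖((L₁.orthogonalProjection y : L₁) :
          EuclideanSpace ℂ (Fin (T + 1) × (Fin dA × Fin dP)))‖ ^ 2 ≤ 1 - 1 / (T + 1)) ∧
    (sSup {r : ℝ | ∃ x ∈ L₁ ⊓ Lᗮ, ∃ y ∈ L₂ ⊓ Lᗮ, ‖x‖ = 1 ∧ ‖y‖ = 1 ∧ r = ‖⟪x, y⟫_ℂ‖}) ^ 2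
      ≤ 1 - 1 / (T + 1) := by
  replace hα : α = uniformState T := hα
  have hproj : ∀ y ∈ L₂, y ∈ Lᗮ → ‖y‖ = 1 → ‖L₁.starProjection y‖ ^ 2 ≤ 1 - 1 / (T + 1) := by
    intro y hy hyL hy1
    subst hα hL₁ hL₂ hL
    have h := norm_sq_starProjection_initSpace (norm_uniformState T) 0 a₀ hy hyL hy1
    rw [norm_sq_uniformState_apply] at h
    exact h.le
  have hc : (0 : ℝ) ≤ 1 - 1 / (T + 1) := sub_nonneg.2 (div_le_one_of_le₀ (by simp) (by positivity))
  refine ⟨hproj, sSup_sq_le_of_forall_sq_le hc ?_⟩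
  rintro _ ⟨x, hx, y, hy, hx1, hy1, rfl⟩
  refine ⟨norm_nonneg _, ?_⟩
  calc ‖⟪x, y⟫_ℂ‖ ^ 2 ≤ ‖L₁.starProjection y‖ ^ 2 := by
        gcongr
        simpa [hx1] using norm_inner_le_norm_mul_norm_starProjection hx.1 y
    _ ≤ 1 - 1 / (T + 1 : ℝ) := hproj y hy.1 hy.2 hy1

/-- **The key angle bound `cos²θ ≤ 1 − 1/(T+1)`.** In `H = C ⊗ A ⊗ P` (clock, ancilla,
proof), with `α = (1/√(T+1)) Σ_t e_t`, `L₁ = span{e₀ ⊗ a₀ ⊗ p} + span{e_t ⊗ a ⊗ p : t ≥ 1}`,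
`L₂ = span{α ⊗ a ⊗ p}` and `L = span{α ⊗ a₀ ⊗ p}`: every unit vector `y ∈ L₂` orthogonal
to `L` has squared projection onto `L₁` at most `1 − 1/(T+1)`; in particular
`cos²θ(L₁ ⊓ Lᗮ, L₂ ⊓ Lᗮ) ≤ 1 − 1/(T+1)`. -/
theorem angle_bound
    (T dA dP : ℕ) (hT : 1 ≤ T) (hdA : 2 ≤ dA) (hdP : 1 ≤ dP)
    (a₀ : EuclideanSpace ℂ (Fin dA)) (ha₀ : ‖a₀‖ = 1)
    (α : EuclideanSpace ℂ (Fin (T + 1)))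
    (hα : α = ((Real.sqrt (T + 1) : ℂ))⁻¹ • ∑ t : Fin (T + 1), EuclideanSpace.single t 1)
    (L₁ L₂ L : Submodule ℂ (EuclideanSpace ℂ (Fin (T + 1) × (Fin dA × Fin dP))))
    (hL₁ : L₁ = Submodule.span ℂ
      ({x | ∃ p : EuclideanSpace ℂ (Fin dP),
          x = tensorVec (EuclideanSpace.single 0 1) (tensorVec a₀ p)} ∪
       {x | ∃ t : Fin (T + 1), t ≠ 0 ∧ ∃ a : EuclideanSpace ℂ (Fin dA),
          ∃ p : EuclideanSpace ℂ (Fin dP),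
          x = tensorVec (EuclideanSpace.single t 1) (tensorVec a p)}))
    (hL₂ : L₂ = Submodule.span ℂ
      {x | ∃ a : EuclideanSpace ℂ (Fin dA), ∃ p : EuclideanSpace ℂ (Fin dP),
          x = tensorVec α (tensorVec a p)})
    (hL : L = Submodule.span ℂ
      {x | ∃ p : EuclideanSpace ℂ (Fin dP), x = tensorVec α (tensorVec a₀ p)}) :
    (∀ y ∈ L₂, y ∈ Lᗮ → ‖y‖ = 1 →
      ‖((L₁.orthogonalProjection y : L₁) :
          EuclideanSpace ℂ (Fin (T + 1) × (Fin dA × Fin dP)))‖ ^ 2 ≤ 1 - 1 / (T + 1)) ∧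
    (sSup {r : ℝ | ∃ x ∈ L₁ ⊓ Lᗮ, ∃ y ∈ L₂ ⊓ Lᗮ, ‖x‖ = 1 ∧ ‖y‖ = 1 ∧ r = ‖⟪x, y⟫_ℂ‖}) ^ 2
      ≤ 1 - 1 / (T + 1) :=
  angle_bound_general T dA dP a₀ α hα L₁ L₂ L hL₁ hL₂ hL
end
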